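/- arXiv:1209.2081 — 2 statements merged into one kernel-verified Lean document; each statement's English description precedes it below -/
import Mathlib

section
/- Let 0 → L →ι M →π N → 0 be a split short exact sequence of modules over a finite dimensional algebra Λ, with a fixed splitting. For submodules A ⊆ L and C ⊆ N, the set of submodules B ⊆ M with ι⁻¹(B) = A and π(B) = C is in natural bijection with Hom_Λ(C, L/A). -/
/-!
The splitting identifies `M` with `L × N`, turning `ι` and `π` into `inl` and `snd`. A submodule
`B ⊆ L × N` with `B ∩ L = A` and `snd B = C` is then the pullback graph of the map
`C → L ⧸ A`, `c ↦ l + A` for any `(l, c) ∈ B`: two choices of `l` differ by an element of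
`B ∩ L = A`, and conversely `B` is recovered from this map since it contains `A × 0`.
-/

open LinearMap

section ProdSubmodules

variable {R L N : Type*} [Ring R] [AddCommGroup L] [Module R L] [AddCommGroup N] [Module R N]
  {A : Submodule R L} {C : Submodule R N}

def LinearMap.pullbackGraph (φ : C →ₗ[R] L ⧸ A) : Submodule R (L × N) :=
  (range (C.subtype.prod φ)).comap ((snd R L N).prod (A.mkQ ∘ₗ fst R L N))

theorem LinearMap.mem_pullbackGraph {φ : C →ₗ[R] L ⧸ A} {x : L × N} :
    x ∈ φ.pullbackGraph ↔ ∃ h : x.2 ∈ C, φ ⟨x.2, h⟩ = A.mkQ x.1 := by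
  simp [pullbackGraph, Prod.ext_iff]

theorem LinearMap.comap_inl_pullbackGraph (φ : C →ₗ[R] L ⧸ A) :
    φ.pullbackGraph.comap (inl R L N) = A := by
  ext l
  simp [mem_pullbackGraph, ← ZeroMemClass.zero_def, eq_comm (a := (0 : L ⧸ A)),
    Submodule.Quotient.mk_eq_zero]

theorem LinearMap.map_snd_pullbackGraph (φ : C →ₗ[R] L ⧸ A) :
    φ.pullbackGraph.map (snd R L N) = C := by
  ext n
  refine ⟨fun ⟨x, hx, hxn⟩ ↦ hxn ▸ (mem_pullbackGraph.1 hx).1, fun hn ↦ ?_⟩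
  obtain ⟨l, hl⟩ := A.mkQ_surjective (φ ⟨n, hn⟩)
  exact ⟨(l, n), mem_pullbackGraph.2 ⟨hn, hl.symm⟩, rfl⟩

variable {B : Submodule R (L × N)}

def Submodule.sndRestrict (hC : B.map (LinearMap.snd R L N) = C) : B →ₗ[R] C :=
  codRestrict C (LinearMap.snd R L N ∘ₗ B.subtype) fun x ↦ hC ▸ mem_map_of_mem x.2

theorem Submodule.sndRestrict_surjective (hC : B.map (LinearMap.snd R L N) = C) :
    Function.Surjective (sndRestrict hC) := by
  rintro ⟨n, hn⟩
  obtain ⟨x, hx, rfl⟩ := hC ▸ hn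
  exact ⟨⟨x, hx⟩, rfl⟩

theorem Submodule.ker_sndRestrict_le (hA : B.comap (LinearMap.inl R L N) ≤ A)
    (hC : B.map (LinearMap.snd R L N) = C) :
    ker (sndRestrict hC) ≤ ker (A.mkQ ∘ₗ LinearMap.fst R L N ∘ₗ B.subtype) := by
  rintro ⟨⟨l, n⟩, hx⟩ h
  obtain rfl : n = 0 := congrArg Subtype.val h
  simpa [Submodule.Quotient.mk_eq_zero] using hA hx

/-- `c ↦ l + A` for any `(l, c) ∈ B`; well defined because `B ∩ L ⊆ A`. -/
noncomputable def Submodule.graphHom (hA : B.comap (LinearMap.inl R L N) ≤ A)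
    (hC : B.map (LinearMap.snd R L N) = C) : C →ₗ[R] L ⧸ A :=
  (ker (sndRestrict hC)).liftQ _ (ker_sndRestrict_le hA hC) ∘ₗ
    ((sndRestrict hC).quotKerEquivOfSurjective (sndRestrict_surjective hC)).symm.toLinearMap

theorem Submodule.graphHom_apply (hA : B.comap (LinearMap.inl R L N) ≤ A)
    (hC : B.map (LinearMap.snd R L N) = C) {x : L × N} (hx : x ∈ B) (hxC : x.2 ∈ C) :
    graphHom hA hC ⟨x.2, hxC⟩ = A.mkQ x.1 := by
  have : sndRestrict hC ⟨x, hx⟩ = ⟨x.2, hxC⟩ := rfl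
  rw [graphHom, coe_comp, Function.comp_apply, ← this, LinearEquiv.coe_coe]
  simp

theorem Submodule.pullbackGraph_graphHom (hA : B.comap (LinearMap.inl R L N) = A)
    (hC : B.map (LinearMap.snd R L N) = C) : (graphHom hA.le hC).pullbackGraph = B := by
  ext ⟨l, n⟩
  rw [mem_pullbackGraph]
  constructor
  · rintro ⟨hn, hl⟩
    obtain ⟨x, hx, rfl⟩ := hC ▸ hn
    have hlA : l - x.1 ∈ A :=
      (Submodule.Quotient.eq A).1 (hl.symm.trans (graphHom_apply hA.le hC hx hn))
    have hinl : LinearMap.inl R L N (l - x.1) ∈ B := hA.ge hlA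
    convert add_mem hx hinl using 1
    ext <;> simp
  · intro h
    exact ⟨hC ▸ mem_map_of_mem h, graphHom_apply hA.le hC h _⟩

variable (A C) in
noncomputable def LinearMap.pullbackGraphEquiv : (C →ₗ[R] L ⧸ A) ≃
    {B : Submodule R (L × N) // B.comap (inl R L N) = A ∧ B.map (snd R L N) = C} where
  toFun φ := ⟨φ.pullbackGraph, comap_inl_pullbackGraph φ, map_snd_pullbackGraph φ⟩
  invFun B := Submodule.graphHom B.2.1.le B.2.2
  left_inv φ := LinearMap.ext fun c ↦ by
    obtain ⟨l, hl⟩ := A.mkQ_surjective (φ c)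
    have hlc : ((l, c.1) : L × N) ∈ φ.pullbackGraph := mem_pullbackGraph.2 ⟨c.2, hl.symm⟩
    exact (Submodule.graphHom_apply (comap_inl_pullbackGraph φ).le (map_snd_pullbackGraph φ)
      hlc c.2).trans hl
  right_inv B := by
    ext1
    exact Submodule.pullbackGraph_graphHom B.2.1 B.2.2

end ProdSubmodules

def LinearEquiv.subtypeComapMapEquiv {R L M N : Type*} [Ring R] [AddCommGroup L] [Module R L]
    [AddCommGroup M] [Module R M] [AddCommGroup N] [Module R N]
    {A : Submodule R L} {C : Submodule R N} {ι : L →ₗ[R] M} {π : M →ₗ[R] N}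
    (e : M ≃ₗ[R] L × N) (hι : ι = e.symm ∘ₗ inl R L N) (hπ : π = snd R L N ∘ₗ e) :
    {B : Submodule R M // B.comap ι = A ∧ B.map π = C} ≃
      {B : Submodule R (L × N) // B.comap (inl R L N) = A ∧ B.map (snd R L N) = C} :=
  (Submodule.orderIsoMapComap e).toEquiv.subtypeEquiv fun B ↦ by
    subst hι hπ
    simp [Submodule.comap_comp, Submodule.map_comp, Submodule.map_equiv_eq_comap_symm]

universe u v

theorem stmt3_general
    (Λ : Type v) [Ring Λ]
    (L M N : Type v)
    [AddCommGroup L] [Module Λ L] [AddCommGroup M] [Module Λ M]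
    [AddCommGroup N] [Module Λ N]
    (ι : L →ₗ[Λ] M) (π : M →ₗ[Λ] N)
    (hinj : Function.Injective ι)
    (hexact : LinearMap.range ι = LinearMap.ker π)
    (s : N →ₗ[Λ] M) (hs : π ∘ₗ s = LinearMap.id)
    (A : Submodule Λ L) (C : Submodule Λ N) :
    Nonempty
      ({B : Submodule Λ M // Submodule.comap ι B = A ∧ Submodule.map π B = C}
        ≃ (C →ₗ[Λ] L ⧸ A)) := by
  obtain ⟨e, hι, hπ⟩ := (exact_iff.2 hexact.symm).splitSurjectiveEquiv hinj ⟨s, hs⟩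
  exact ⟨(e.subtypeComapMapEquiv hι hπ).trans (pullbackGraphEquiv A C).symm⟩

theorem stmt3 (k : Type u) [Field k]
    (Λ : Type v) [Ring Λ] [Algebra k Λ] [FiniteDimensional k Λ]
    (L M N : Type v)
    [AddCommGroup L] [Module Λ L] [AddCommGroup M] [Module Λ M]
    [AddCommGroup N] [Module Λ N]
    (ι : L →ₗ[Λ] M) (π : M →ₗ[Λ] N)
    (hinj : Function.Injective ι) (hsurj : Function.Surjective π)
    (hexact : LinearMap.range ι = LinearMap.ker π)
    (s : N →ₗ[Λ] M) (hs : π ∘ₗ s = LinearMap.id)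
    (A : Submodule Λ L) (C : Submodule Λ N) :
    Nonempty
      ({B : Submodule Λ M // Submodule.comap ι B = A ∧ Submodule.map π B = C}
        ≃ (C →ₗ[Λ] L ⧸ A)) :=
  stmt3_general Λ L M N ι π hinj hexact s hs A C
end

section
/- Let α: A → L be the inclusion of a nonzero submodule, 0 → A → M' →ν N → 0 a short exact sequence with class Ψ ∈ Ext¹(N,A), and 0 → L →ι M →π N → 0 its pushout along α with induced map α': M' → M. Then α' is injective, and the map Hom_Λ(N, L/A) → {B ⊆ M : ι⁻¹(B) = A, π(B) = N}, φ ↦ {ι(l) + α'(m) : (l,m) ∈ L × M', β(l) = φ(ν(m))}, is a bijection, where β: L → L/A is the projection. -/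
/-!
The map `(β, 0) : L × M' → L ⧸ A` kills the kernel of the surjection `(ι, α') : L × M' → M`, so it
descends to `ρ : M → L ⧸ A` with `ρ ∘ ι = β` and `ρ ∘ α' = 0`; then `(ρ, π) : M → L ⧸ A × N` is
surjective, and `pushSet φ` is the kernel of `ρ - φ ∘ π`, the preimage of the graph of `φ`.
Conversely, if `ι⁻¹ B = A` and `π B = N`, then `π|_B` is surjective with kernel
`B ∩ ι L = ι A ⊆ ker ρ`, so `ρ|_B = φ ∘ π|_B` for some `φ`, and `B = ker (ρ - φ ∘ π)`.
-/

universe u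

/-- The subset of M associated to φ : N → L/A; the claim includes that it is
(the underlying set of) a submodule. -/
def pushSet {Λ : Type u} [Ring Λ] {L M M' N : Type u}
    [AddCommGroup L] [Module Λ L] [AddCommGroup M] [Module Λ M]
    [AddCommGroup M'] [Module Λ M'] [AddCommGroup N] [Module Λ N]
    (A : Submodule Λ L) (ι : L →ₗ[Λ] M) (α' : M' →ₗ[Λ] M) (ν : M' →ₗ[Λ] N)
    (φ : N →ₗ[Λ] L ⧸ A) : Set M :=
  {x : M | ∃ (l : L) (m : M'), A.mkQ l = φ (ν m) ∧ x = ι l + α' m}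

open LinearMap Submodule

section Graph

variable {R M N P Q : Type*} [Ring R] [AddCommGroup M] [Module R M] [AddCommGroup N]
  [Module R N] [AddCommGroup P] [Module R P] [AddCommGroup Q] [Module R Q]

theorem LinearMap.exists_comp_eq_of_surjective_of_ker_le {f : M →ₗ[R] N}
    (hf : Function.Surjective f) {g : M →ₗ[R] P} (h : ker f ≤ ker g) :
    ∃ φ : N →ₗ[R] P, φ ∘ₗ f = g :=
  ⟨(ker f).liftQ g h ∘ₗ (f.quotKerEquivOfSurjective hf).symm.toLinearMap, by
    ext x
    have : (f.quotKerEquivOfSurjective hf).symm (f x) = (ker f).mkQ x :=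
      (LinearEquiv.symm_apply_eq _).mpr rfl
    simp [this]⟩

variable {ρ : M →ₗ[R] Q} {π : M →ₗ[R] N}

theorem map_ker_sub_comp_eq_top (h : Function.Surjective (ρ.prod π)) (φ : N →ₗ[R] Q) :
    map π (ker (ρ - φ ∘ₗ π)) = ⊤ := by
  refine eq_top_iff'.mpr fun n => ?_
  obtain ⟨x, hx⟩ := h (φ n, n)
  obtain ⟨hρx, hπx⟩ := Prod.ext_iff.mp hx
  exact ⟨x, by simp_all, hπx⟩

theorem ker_sub_comp_injective (h : Function.Surjective (ρ.prod π)) :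
    Function.Injective fun φ : N →ₗ[R] Q => ker (ρ - φ ∘ₗ π) := by
  intro φ ψ hφψ
  ext n
  obtain ⟨x, hx, rfl⟩ := (eq_top_iff'.mp (map_ker_sub_comp_eq_top h φ)) n
  have hker : ker (ρ - φ ∘ₗ π) = ker (ρ - ψ ∘ₗ π) := hφψ
  have hx' : x ∈ ker (ρ - ψ ∘ₗ π) := hker ▸ hx
  simp only [SetLike.mem_coe, mem_ker, LinearMap.sub_apply, comp_apply, sub_eq_zero] at hx hx'
  rw [← hx, ← hx']

theorem comap_ker_sub_comp {ι : P →ₗ[R] M} (hπι : π ∘ₗ ι = 0) (φ : N →ₗ[R] Q) :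
    comap ι (ker (ρ - φ ∘ₗ π)) = ker (ρ ∘ₗ ι) := by
  ext l
  have : π (ι l) = 0 := LinearMap.congr_fun hπι l
  simp [this]

theorem exists_ker_sub_comp_eq {ι : P →ₗ[R] M} (hexact : ker π ≤ range ι) (B : Submodule R M)
    (hBι : comap ι B = ker (ρ ∘ₗ ι)) (hBπ : map π B = ⊤) :
    ∃ φ : N →ₗ[R] Q, B = ker (ρ - φ ∘ₗ π) := by
  have hmem_iff : ∀ x ∈ ker π, x ∈ B ↔ ρ x = 0 := by
    intro x hx
    obtain ⟨l, rfl⟩ := hexact hx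
    exact SetLike.ext_iff.mp hBι l
  have hπB : Function.Surjective (π ∘ₗ B.subtype) := by
    rwa [← range_eq_top, range_comp, range_subtype]
  obtain ⟨φ, hφ⟩ := (π ∘ₗ B.subtype).exists_comp_eq_of_surjective_of_ker_le hπB
    (g := ρ ∘ₗ B.subtype) fun b hb => (hmem_iff b hb).mp b.2
  refine ⟨φ, le_antisymm (fun b hb => ?_) (fun x hx => ?_)⟩
  · have : φ (π b) = ρ b := LinearMap.congr_fun hφ ⟨b, hb⟩
    simp [this]
  · obtain ⟨b, hb, hbx⟩ := (eq_top_iff'.mp hBπ) (π x)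
    have hρb : φ (π b) = ρ b := LinearMap.congr_fun hφ ⟨b, hb⟩
    have hxb : x - b ∈ ker π := by simp [hbx]
    have hρxb : ρ (x - b) = 0 := by
      simp only [mem_ker, LinearMap.sub_apply, comp_apply, sub_eq_zero] at hx
      rw [map_sub, hx, ← hρb, hbx, sub_self]
    simpa using B.add_mem ((hmem_iff _ hxb).mpr hρxb) hb

end Graph

section Pushout

variable {Λ L M M' N : Type u} [Ring Λ] [AddCommGroup L] [Module Λ L] [AddCommGroup M]
  [Module Λ M] [AddCommGroup M'] [Module Λ M'] [AddCommGroup N] [Module Λ N]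
  {A : Submodule Λ L} {ιA : A →ₗ[Λ] M'} {ν : M' →ₗ[Λ] N} {ι : L →ₗ[Λ] M} {π : M →ₗ[Λ] N}
  {α' : M' →ₗ[Λ] M}

theorem pushout_exists_of_apply_eq (hexact' : ker ν ≤ range ιA) (hι : Function.Injective ι)
    (hπι : π ∘ₗ ι = 0) (hcomm₁ : α' ∘ₗ ιA = ι ∘ₗ A.subtype) (hcomm₂ : π ∘ₗ α' = ν)
    {l : L} {m : M'} (h : ι l = α' m) : ∃ a : A, ιA a = m ∧ (a : L) = l := by
  have hνm : ν m = 0 := by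
    rw [← hcomm₂, comp_apply, ← h]
    exact LinearMap.congr_fun hπι l
  obtain ⟨a, rfl⟩ := hexact' hνm
  exact ⟨a, rfl, hι (h ▸ (LinearMap.congr_fun hcomm₁ a).symm)⟩

theorem pushout_injective (hexact' : ker ν ≤ range ιA) (hι : Function.Injective ι)
    (hπι : π ∘ₗ ι = 0) (hcomm₁ : α' ∘ₗ ιA = ι ∘ₗ A.subtype) (hcomm₂ : π ∘ₗ α' = ν) :
    Function.Injective α' := by
  refine (injective_iff_map_eq_zero α').mpr ?_
  intro m hm
  have : ι 0 = α' m := by rw [hm, map_zero]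
  obtain ⟨a, rfl, ha⟩ := pushout_exists_of_apply_eq hexact' hι hπι hcomm₁ hcomm₂ this
  rw [show a = 0 from Subtype.ext ha, map_zero]

theorem pushout_coprod_surjective (hν : Function.Surjective ν) (hexact : ker π ≤ range ι)
    (hcomm₂ : π ∘ₗ α' = ν) : Function.Surjective (ι.coprod α') := by
  intro x
  obtain ⟨m, hm⟩ := hν (π x)
  obtain ⟨l, hl⟩ := hexact (x := x - α' m) (by simp [← hm, ← hcomm₂])
  exact ⟨(l, m), by simp [hl]⟩

theorem pushout_exists_comp_eq_mkQ (hexact' : ker ν ≤ range ιA) (hι : Function.Injective ι)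
    (hν : Function.Surjective ν) (hπι : π ∘ₗ ι = 0) (hexact : ker π ≤ range ι)
    (hcomm₁ : α' ∘ₗ ιA = ι ∘ₗ A.subtype) (hcomm₂ : π ∘ₗ α' = ν) :
    ∃ ρ : M →ₗ[Λ] L ⧸ A, ρ ∘ₗ ι = A.mkQ ∧ ρ ∘ₗ α' = 0 := by
  have hker : ker (ι.coprod α') ≤ ker (A.mkQ ∘ₗ fst Λ L M') := by
    rintro ⟨l, m⟩ (h : ι l + α' m = 0)
    have : ι (-l) = α' m := by rw [map_neg, neg_eq_iff_add_eq_zero, h]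
    obtain ⟨a, -, ha⟩ := pushout_exists_of_apply_eq hexact' hι hπι hcomm₁ hcomm₂ this
    have : l ∈ A := neg_neg l ▸ ha ▸ neg_mem a.2
    simpa using this
  obtain ⟨ρ, hρ⟩ := (ι.coprod α').exists_comp_eq_of_surjective_of_ker_le
    (pushout_coprod_surjective hν hexact hcomm₂) hker
  refine ⟨ρ, ?_, ?_⟩
  · ext l
    simpa using LinearMap.congr_fun hρ (l, 0)
  · ext m
    simpa using LinearMap.congr_fun hρ (0, m)

theorem pushout_prod_surjective {ρ : M →ₗ[Λ] L ⧸ A} (hν : Function.Surjective ν)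
    (hπι : π ∘ₗ ι = 0) (hcomm₂ : π ∘ₗ α' = ν) (hρι : ρ ∘ₗ ι = A.mkQ) (hρα' : ρ ∘ₗ α' = 0) :
    Function.Surjective (ρ.prod π) := by
  rintro ⟨q, n⟩
  obtain ⟨l, rfl⟩ := A.mkQ_surjective q
  obtain ⟨m, rfl⟩ := hν n
  have hρα'm : ρ (α' m) = 0 := LinearMap.congr_fun hρα' m
  have hπιl : π (ι l) = 0 := LinearMap.congr_fun hπι l
  refine ⟨ι l + α' m, Prod.ext ?_ ?_⟩
  · simp [← hρι, hρα'm]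
  · simp [← hcomm₂, hπιl]

theorem pushSet_eq_ker {ρ : M →ₗ[Λ] L ⧸ A} (hsurj : Function.Surjective (ι.coprod α'))
    (hπι : π ∘ₗ ι = 0) (hcomm₂ : π ∘ₗ α' = ν) (hρι : ρ ∘ₗ ι = A.mkQ) (hρα' : ρ ∘ₗ α' = 0)
    (φ : N →ₗ[Λ] L ⧸ A) : pushSet A ι α' ν φ = (ker (ρ - φ ∘ₗ π) : Set M) := by
  ext x
  obtain ⟨⟨l, m⟩, rfl⟩ := hsurj x
  have hρ : ∀ l m, ρ (ι l + α' m) = A.mkQ l := fun l m => by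
    have : ρ (α' m) = 0 := LinearMap.congr_fun hρα' m
    simp [← hρι, this]
  have hπ : ∀ l m, π (ι l + α' m) = ν m := fun l m => by
    have : π (ι l) = 0 := LinearMap.congr_fun hπι l
    simp [← hcomm₂, this]
  simp only [pushSet, coprod_apply, SetLike.mem_coe, mem_ker, LinearMap.sub_apply,
    comp_apply, hρ, hπ, sub_eq_zero]
  constructor
  · rintro ⟨l', m', h, hx⟩
    rw [← hρ l m, ← hπ l m, hx, hρ, hπ, h]
  · intro h
    exact ⟨l, m, h, rfl⟩

end Pushout

theorem stmt16_general
    (Λ : Type u) [Ring Λ]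
    (L M M' N : Type u)
    [AddCommGroup L] [Module Λ L] [AddCommGroup M] [Module Λ M]
    [AddCommGroup M'] [Module Λ M'] [AddCommGroup N] [Module Λ N]
    -- the nonzero submodule A of L
    (A : Submodule Λ L)
    -- the short exact sequence 0 → A → M' →ν N → 0
    (ιA : A →ₗ[Λ] M') (ν : M' →ₗ[Λ] N)
    (hν : Function.Surjective ν)
    (hexact' : LinearMap.range ιA = LinearMap.ker ν)
    -- its pushout 0 → L →ι M →π N → 0 along the inclusion α = A.subtype
    (ι : L →ₗ[Λ] M) (π : M →ₗ[Λ] N) (α' : M' →ₗ[Λ] M)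
    (hι : Function.Injective ι)
    (hexact : LinearMap.range ι = LinearMap.ker π)
    (hcomm₁ : α' ∘ₗ ιA = ι ∘ₗ A.subtype) (hcomm₂ : π ∘ₗ α' = ν) :
    Function.Injective α' ∧
    -- each pushSet φ is a submodule B with ι⁻¹(B) = A and π(B) = N
    (∀ φ : N →ₗ[Λ] L ⧸ A, ∃ B : Submodule Λ M,
        (B : Set M) = pushSet A ι α' ν φ ∧
        Submodule.comap ι B = A ∧ Submodule.map π B = ⊤) ∧
    -- the assignment φ ↦ pushSet φ is injective
    (∀ φ ψ : N →ₗ[Λ] L ⧸ A, pushSet A ι α' ν φ = pushSet A ι α' ν ψ → φ = ψ) ∧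
    -- and it hits every submodule B with ι⁻¹(B) = A and π(B) = N
    (∀ B : Submodule Λ M, Submodule.comap ι B = A → Submodule.map π B = ⊤ →
        ∃ φ : N →ₗ[Λ] L ⧸ A, (B : Set M) = pushSet A ι α' ν φ) := by
  have hπι : π ∘ₗ ι = 0 := range_le_ker_iff.mp hexact.le
  obtain ⟨ρ, hρι, hρα'⟩ :=
    pushout_exists_comp_eq_mkQ hexact'.ge hι hν hπι hexact.ge hcomm₁ hcomm₂
  have hset := pushSet_eq_ker (pushout_coprod_surjective hν hexact.ge hcomm₂) hπι hcomm₂ hρι hρα'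
  have hsurj := pushout_prod_surjective hν hπι hcomm₂ hρι hρα'
  refine ⟨pushout_injective hexact'.ge hι hπι hcomm₁ hcomm₂, fun φ => ?_, fun φ ψ h => ?_,
    fun B hBι hBπ => ?_⟩
  · refine ⟨ker (ρ - φ ∘ₗ π), (hset φ).symm, ?_, map_ker_sub_comp_eq_top hsurj φ⟩
    rw [comap_ker_sub_comp hπι, hρι, ker_mkQ]
  · rw [hset, hset] at h
    exact ker_sub_comp_injective hsurj (SetLike.coe_injective h)
  · obtain ⟨φ, rfl⟩ := exists_ker_sub_comp_eq hexact.ge B (by rw [hρι, ker_mkQ, hBι]) hBπ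
    exact ⟨φ, (hset φ).symm⟩

theorem stmt16 (k : Type u) [Field k]
    (Λ : Type u) [Ring Λ] [Algebra k Λ] [FiniteDimensional k Λ]
    (L M M' N : Type u)
    [AddCommGroup L] [Module Λ L] [AddCommGroup M] [Module Λ M]
    [AddCommGroup M'] [Module Λ M'] [AddCommGroup N] [Module Λ N]
    -- the nonzero submodule A of L
    (A : Submodule Λ L) (hA : A ≠ ⊥)
    -- the short exact sequence 0 → A → M' →ν N → 0
    (ιA : A →ₗ[Λ] M') (ν : M' →ₗ[Λ] N)
    (hιA : Function.Injective ιA) (hν : Function.Surjective ν)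
    (hexact' : LinearMap.range ιA = LinearMap.ker ν)
    -- its pushout 0 → L →ι M →π N → 0 along the inclusion α = A.subtype
    (ι : L →ₗ[Λ] M) (π : M →ₗ[Λ] N) (α' : M' →ₗ[Λ] M)
    (hι : Function.Injective ι) (hπ : Function.Surjective π)
    (hexact : LinearMap.range ι = LinearMap.ker π)
    (hcomm₁ : α' ∘ₗ ιA = ι ∘ₗ A.subtype) (hcomm₂ : π ∘ₗ α' = ν) :
    Function.Injective α' ∧
    -- each pushSet φ is a submodule B with ι⁻¹(B) = A and π(B) = N
    (∀ φ : N →ₗ[Λ] L ⧸ A, ∃ B : Submodule Λ M,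
        (B : Set M) = pushSet A ι α' ν φ ∧
        Submodule.comap ι B = A ∧ Submodule.map π B = ⊤) ∧
    -- the assignment φ ↦ pushSet φ is injective
    (∀ φ ψ : N →ₗ[Λ] L ⧸ A, pushSet A ι α' ν φ = pushSet A ι α' ν ψ → φ = ψ) ∧
    -- and it hits every submodule B with ι⁻¹(B) = A and π(B) = N
    (∀ B : Submodule Λ M, Submodule.comap ι B = A → Submodule.map π B = ⊤ →
        ∃ φ : N →ₗ[Λ] L ⧸ A, (B : Set M) = pushSet A ι α' ν φ) :=
  stmt16_general Λ L M M' N A ιA ν hν hexact' ι π α' hι hexact hcomm₁ hcomm₂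
end
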